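/- Let ρ_AB = Σᵢ qᵢ |ψᵢ⟩⟨ψᵢ| be a separable bipartite state decomposed into product pure states, and let |Ψ⟩_{ABC} be any purification of ρ_AB. Then for local unitaries U_A (on A) and V_B (on B): T(U_A ρ_AB U_A†, ρ_AB) ≤ T(U_A|Ψ⟩_{ABC}, V_B|Ψ⟩_{ABC}) = √(1 − |⟨Ψ|V_B†U_A|Ψ⟩|²). -/

import Mathlib

open Matrix Kronecker
open scoped ComplexOrder

/-- Trace distance `T(ρ,σ) = ½ Tr √((ρ−σ)†(ρ−σ))`. -/
noncomputable def traceDist {n : ℕ} (ρ σ : Matrix (Fin n) (Fin n) ℂ) : ℝ :=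
  (1/2) * ((Matrix.posSemidef_conjTranspose_mul_self (ρ - σ)).1.eigenvectorUnitary.1 *
    diagonal (((↑) : ℝ → ℂ) ∘ (fun x : ℝ => √x) ∘ (Matrix.posSemidef_conjTranspose_mul_self (ρ - σ)).1.eigenvalues) *
    (star (Matrix.posSemidef_conjTranspose_mul_self (ρ - σ)).1.eigenvectorUnitary : Matrix (Fin n) (Fin n) ℂ)).trace.re

/-!
The left side is at most the average `∑ᵢ qᵢ T(U|ψᵢ⟩, |ψᵢ⟩) = ∑ᵢ qᵢ √(1 - |⟨ψᵢ|U|ψᵢ⟩|²)`: in an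
eigenbasis `(eⱼ)` of `UρU† - ρ` each eigenvalue is the `q`-average of the differences
`|⟨eⱼ|Uψᵢ⟩|² - |⟨eⱼ|ψᵢ⟩|²`, and for unit vectors `x, y` Cauchy–Schwarz gives
`∑ⱼ ||⟨eⱼ|x⟩|² - |⟨eⱼ|y⟩|²| ≤ 2√(1 - |⟨x|y⟩|²)`. On the right, `⟨Ψ|V_B†U_A|Ψ⟩ = Tr(V_B†U_A ρ)`
splits over the product states into `∑ᵢ qᵢ ⟨αᵢ|U|αᵢ⟩⟨Vβᵢ|βᵢ⟩`, whose modulus is at most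
`∑ᵢ qᵢ |⟨ψᵢ|U_A|ψᵢ⟩|`. Concavity of `x ↦ √(1 - x²)` on `[0, 1]` compares the two sides.
-/

open scoped InnerProductSpace MatrixOrder

theorem sum_abs_sq_sub_sq_le {ι : Type*} [Fintype ι] (a b : ι → ℝ) (ha : ∀ j, 0 ≤ a j)
    (hb : ∀ j, 0 ≤ b j) (ha2 : ∑ j, a j ^ 2 = 1) (hb2 : ∑ j, b j ^ 2 = 1) :
    ∑ j, |a j ^ 2 - b j ^ 2| ≤ 2 * √(1 - (∑ j, a j * b j) ^ 2) := by
  set s := ∑ j, a j * b j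
  have hfactor : ∀ j, |a j ^ 2 - b j ^ 2| = (a j + b j) * |a j - b j| := fun j => by
    rw [show a j ^ 2 - b j ^ 2 = (a j + b j) * (a j - b j) by ring, abs_mul,
      abs_of_nonneg (add_nonneg (ha j) (hb j))]
  have hplus : ∑ j, (a j + b j) ^ 2 = 2 + 2 * s := by
    simp only [add_sq, Finset.sum_add_distrib, ha2, hb2, mul_assoc, ← Finset.mul_sum, s]
    ring
  have hminus : ∑ j, |a j - b j| ^ 2 = 2 - 2 * s := by
    simp only [sq_abs, sub_sq, Finset.sum_add_distrib, Finset.sum_sub_distrib, ha2, hb2,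
      mul_assoc, ← Finset.mul_sum, s]
    ring
  have hCS := Finset.sum_mul_sq_le_sq_mul_sq Finset.univ (fun j => a j + b j)
    (fun j => |a j - b j|)
  rw [hplus, hminus, show (2 + 2 * s) * (2 - 2 * s) = 2 ^ 2 * (1 - s ^ 2) by ring] at hCS
  simp only [hfactor]
  rw [← Real.sqrt_sq (by positivity : (0 : ℝ) ≤ 2), ← Real.sqrt_mul (by positivity)]
  exact Real.le_sqrt_of_sq_le hCS

theorem sum_mul_sqrt_one_sub_sq_le {κ : Type*} [Fintype κ] (q x : κ → ℝ) (hq : ∀ i, 0 ≤ q i)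
    (hqs : ∑ i, q i = 1) (hx0 : ∀ i, 0 ≤ x i) (hx1 : ∀ i, x i ≤ 1) {t : ℝ} (ht0 : 0 ≤ t)
    (ht : t ≤ ∑ i, q i * x i) :
    ∑ i, q i * √(1 - x i ^ 2) ≤ √(1 - t ^ 2) := by
  have hsqrt := Real.pow_arith_mean_le_arith_mean_pow Finset.univ q (fun i => √(1 - x i ^ 2))
    (fun i _ => hq i) hqs (fun i _ => Real.sqrt_nonneg _) 2
  have hsq := Real.pow_arith_mean_le_arith_mean_pow_of_even Finset.univ q x
    (fun i _ => hq i) hqs even_two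
  have hmean : ∑ i, q i * √(1 - x i ^ 2) ^ 2 = 1 - ∑ i, q i * x i ^ 2 := by
    have h : ∀ i, 0 ≤ 1 - x i ^ 2 := fun i => by nlinarith [hx0 i, hx1 i]
    simp only [Real.sq_sqrt (h _), mul_sub, mul_one, Finset.sum_sub_distrib, hqs]
  apply Real.le_sqrt_of_sq_le
  nlinarith [mul_le_mul ht ht ht0 (ht0.trans ht)]

theorem norm_sum_ofReal_mul_mul_le {κ : Type*} [Fintype κ] (q : κ → ℝ) (hq : ∀ i, 0 ≤ q i)
    (c b : κ → ℂ) (hb : ∀ i, ‖b i‖ ≤ 1) : ‖∑ i, (q i : ℂ) * (c i * b i)‖ ≤ ∑ i, q i * ‖c i‖ := by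
  refine (norm_sum_le _ _).trans (Finset.sum_le_sum fun i _ => ?_)
  rw [norm_mul, norm_mul, Complex.norm_real, Real.norm_of_nonneg (hq i)]
  exact mul_le_mul_of_nonneg_left (mul_le_of_le_one_right (norm_nonneg _) (hb i)) (hq i)

theorem OrthonormalBasis.sum_abs_sq_norm_inner_sub_le {𝕜 E ι : Type*} [RCLike 𝕜]
    [NormedAddCommGroup E] [InnerProductSpace 𝕜 E] [Fintype ι] (b : OrthonormalBasis ι 𝕜 E)
    {x y : E} (hx : ‖x‖ = 1) (hy : ‖y‖ = 1) :
    ∑ j, |‖⟪b j, x⟫_𝕜‖ ^ 2 - ‖⟪b j, y⟫_𝕜‖ ^ 2| ≤ 2 * √(1 - ‖⟪y, x⟫_𝕜‖ ^ 2) := by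
  have hoverlap : ‖⟪y, x⟫_𝕜‖ ≤ ∑ j, ‖⟪b j, x⟫_𝕜‖ * ‖⟪b j, y⟫_𝕜‖ := by
    rw [← b.sum_inner_mul_inner y x]
    refine (norm_sum_le _ _).trans_eq (Finset.sum_congr rfl fun j _ => ?_)
    rw [norm_mul, ← inner_conj_symm, RCLike.norm_conj, mul_comm]
  refine (sum_abs_sq_sub_sq_le _ _ (fun _ => norm_nonneg _) (fun _ => norm_nonneg _)
    (by rw [b.sum_sq_norm_inner_right, hx, one_pow])
    (by rw [b.sum_sq_norm_inner_right, hy, one_pow])).trans ?_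
  gcongr

namespace Matrix

variable {ι κ : Type*} [Fintype ι] [Fintype κ]

theorem star_dotProduct_eq_inner (x y : ι → ℂ) :
    star x ⬝ᵥ y = ⟪WithLp.toLp 2 x, WithLp.toLp 2 y⟫_ℂ := by
  rw [EuclideanSpace.inner_toLp_toLp, dotProduct_comm]

theorem norm_toLp_eq_one {u : ι → ℂ} (hu : star u ⬝ᵥ u = 1) : ‖WithLp.toLp 2 u‖ = 1 := by
  rw [@norm_eq_sqrt_re_inner ℂ, ← star_dotProduct_eq_inner, hu, RCLike.one_re, Real.sqrt_one]

theorem norm_star_dotProduct_le_one {x y : ι → ℂ} (hx : star x ⬝ᵥ x = 1)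
    (hy : star y ⬝ᵥ y = 1) : ‖star x ⬝ᵥ y‖ ≤ 1 := by
  rw [star_dotProduct_eq_inner]
  refine (norm_inner_le_norm _ _).trans_eq ?_
  rw [norm_toLp_eq_one hx, norm_toLp_eq_one hy, one_mul]

theorem star_mulVec_dotProduct_mulVec_of_mem_unitaryGroup [DecidableEq ι]
    {U : Matrix ι ι ℂ} (hU : U ∈ unitaryGroup ι ℂ) (x y : ι → ℂ) :
    star (U *ᵥ x) ⬝ᵥ (U *ᵥ y) = star x ⬝ᵥ y := by
  rw [star_mulVec, dotProduct_mulVec, vecMul_vecMul, ← star_eq_conjTranspose,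
    mem_unitaryGroup_iff'.mp hU, vecMul_one]

theorem star_dotProduct_vecMulVec_mulVec (w : EuclideanSpace ℂ ι) (u : ι → ℂ) :
    star ⇑w ⬝ᵥ (vecMulVec u (star u) *ᵥ ⇑w) = ((‖⟪w, WithLp.toLp 2 u⟫_ℂ‖ ^ 2 : ℝ) : ℂ) := by
  rw [vecMulVec_mulVec, op_smul_eq_smul, dotProduct_smul, smul_eq_mul,
    EuclideanSpace.inner_eq_star_dotProduct, WithLp.ofLp_toLp, dotProduct_comm u,
    Complex.ofReal_pow, ← Complex.mul_conj', star_dotProduct, mul_comm, Complex.star_def]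

theorem IsHermitian.sum_abs_eigenvalues_le [DecidableEq ι] {M : Matrix ι ι ℂ}
    (hM : M.IsHermitian) (q : κ → ℝ) (hq : ∀ i, 0 ≤ q i) (u v : κ → ι → ℂ)
    (hu : ∀ i, star (u i) ⬝ᵥ u i = 1) (hv : ∀ i, star (v i) ⬝ᵥ v i = 1)
    (hMd : M = ∑ i, (q i : ℂ) •
      (vecMulVec (u i) (star (u i)) - vecMulVec (v i) (star (v i)))) :
    ∑ j, |hM.eigenvalues j| ≤ 2 * ∑ i, q i * √(1 - ‖star (v i) ⬝ᵥ u i‖ ^ 2) := by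
  have hexpect : ∀ w : EuclideanSpace ℂ ι, RCLike.re (star ⇑w ⬝ᵥ (M *ᵥ ⇑w)) =
      ∑ i, q i * (‖⟪w, WithLp.toLp 2 (u i)⟫_ℂ‖ ^ 2 - ‖⟪w, WithLp.toLp 2 (v i)⟫_ℂ‖ ^ 2) := by
    intro w
    rw [hMd]
    simp only [sum_mulVec, smul_mulVec, sub_mulVec, dotProduct_sum, dotProduct_smul,
      dotProduct_sub, star_dotProduct_vecMulVec_mulVec, map_sum, smul_eq_mul,
      ← Complex.ofReal_sub, ← Complex.ofReal_mul, RCLike.re_to_complex, Complex.ofReal_re]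
  set b := hM.eigenvectorBasis
  have hpure : ∀ i,
      ∑ j, |‖⟪b j, WithLp.toLp 2 (u i)⟫_ℂ‖ ^ 2 - ‖⟪b j, WithLp.toLp 2 (v i)⟫_ℂ‖ ^ 2|
        ≤ 2 * √(1 - ‖star (v i) ⬝ᵥ u i‖ ^ 2) := fun i => by
    rw [star_dotProduct_eq_inner]
    exact b.sum_abs_sq_norm_inner_sub_le (norm_toLp_eq_one (hu i)) (norm_toLp_eq_one (hv i))
  calc ∑ j, |hM.eigenvalues j|
      ≤ ∑ j, ∑ i, q i *
          |‖⟪b j, WithLp.toLp 2 (u i)⟫_ℂ‖ ^ 2 - ‖⟪b j, WithLp.toLp 2 (v i)⟫_ℂ‖ ^ 2| := by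
        gcongr with j
        rw [hM.eigenvalues_eq, hexpect]
        refine (Finset.abs_sum_le_sum_abs _ _).trans_eq (Finset.sum_congr rfl fun i _ => ?_)
        rw [abs_mul, abs_of_nonneg (hq i)]
    _ = ∑ i, q i *
          ∑ j, |‖⟪b j, WithLp.toLp 2 (u i)⟫_ℂ‖ ^ 2 - ‖⟪b j, WithLp.toLp 2 (v i)⟫_ℂ‖ ^ 2| := by
        simp only [Finset.mul_sum]
        exact Finset.sum_comm
    _ ≤ ∑ i, q i * (2 * √(1 - ‖star (v i) ⬝ᵥ u i‖ ^ 2)) := by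
        gcongr with i
        exacts [hq i, hpure i]
    _ = 2 * ∑ i, q i * √(1 - ‖star (v i) ⬝ᵥ u i‖ ^ 2) := by
        rw [Finset.mul_sum]
        exact Finset.sum_congr rfl fun i _ => by ring

theorem IsHermitian.trace_cfcAbs [DecidableEq ι] {M : Matrix ι ι ℂ} (hM : M.IsHermitian) :
    (CFC.abs M).trace = ∑ j, ((|hM.eigenvalues j| : ℝ) : ℂ) := by
  rw [CFC.abs_eq_cfc_norm M hM.isSelfAdjoint, hM.cfc_eq, IsHermitian.cfc,
    Unitary.conjStarAlgAut_apply, trace_mul_cycle, Unitary.coe_star_mul_self, Matrix.one_mul,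
    trace_diagonal]
  simp

theorem cfcAbs_submatrix [DecidableEq ι] {m : Type*} [Fintype m] [DecidableEq m]
    (M : Matrix ι ι ℂ) (e : m ≃ ι) :
    CFC.abs (M.submatrix e e) = (CFC.abs M).submatrix e e := by
  refine CFC.sqrt_unique ?_ ((CFC.abs_nonneg M).posSemidef.submatrix e).nonneg
  rw [submatrix_mul_equiv, CFC.abs_mul_abs, star_eq_conjTranspose, star_eq_conjTranspose,
    conjTranspose_submatrix, submatrix_mul_equiv]

theorem trace_mul_vecMulVec_star (A B : Matrix ι ι ℂ) (x : ι → ℂ) :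
    (Bᴴ * A * vecMulVec x (star x)).trace = star (B *ᵥ x) ⬝ᵥ (A *ᵥ x) := by
  rw [mul_vecMulVec, trace_vecMulVec, dotProduct_comm, star_mulVec, ← dotProduct_mulVec,
    mulVec_mulVec]

theorem star_kronecker_one_mulVec_dotProduct [DecidableEq κ] {ρ : Matrix ι ι ℂ}
    {Ψ : ι × κ → ℂ} (hΨ : ∀ p p', ρ p p' = ∑ c, Ψ (p, c) * star (Ψ (p', c)))
    (A B : Matrix ι ι ℂ) :
    star ((B ⊗ₖ (1 : Matrix κ κ ℂ)) *ᵥ Ψ) ⬝ᵥ ((A ⊗ₖ (1 : Matrix κ κ ℂ)) *ᵥ Ψ) =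
      (Bᴴ * A * ρ).trace := by
  obtain ⟨Y, rfl⟩ : ∃ Y : Matrix ι κ ℂ, Ψ = vec Yᵀ := ⟨of fun p c => Ψ (p, c), rfl⟩
  have hρY : ρ = Y * Yᴴ := by
    ext p p'
    simp [mul_apply, hΨ, vec]
  rw [kronecker_mulVec_vec, kronecker_mulVec_vec, star_vec_dotProduct_vec, hρY, Matrix.one_mul,
    ← transpose_mul, ← transpose_mul, transpose_conjTranspose, ← conjTranspose_transpose,
    ← transpose_mul, trace_transpose, conjTranspose_mul, ← Matrix.mul_assoc, trace_mul_comm]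
  simp only [Matrix.mul_assoc]

theorem kronecker_mulVec_prod {R l m : Type*} [CommSemiring R] (A : Matrix l ι R)
    (B : Matrix m κ R) (x : ι → R) (y : κ → R) :
    (A ⊗ₖ B) *ᵥ (fun p : ι × κ => x p.1 * y p.2) = fun p => (A *ᵥ x) p.1 * (B *ᵥ y) p.2 := by
  ext ⟨i, j⟩
  simp only [mulVec, dotProduct, Fintype.sum_prod_type, kroneckerMap_apply, Finset.sum_mul,
    Finset.mul_sum]
  rw [Finset.sum_comm]
  exact Finset.sum_congr rfl fun _ _ => Finset.sum_congr rfl fun _ _ => by ring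

theorem star_prod_dotProduct_prod {R : Type*} [CommSemiring R] [StarRing R] (x x' : ι → R)
    (y y' : κ → R) :
    star (fun p : ι × κ => x p.1 * y p.2) ⬝ᵥ (fun p => x' p.1 * y' p.2) =
      (star x ⬝ᵥ x') * (star y ⬝ᵥ y') := by
  simp only [dotProduct, Fintype.sum_prod_type, Pi.star_apply, star_mul', Finset.sum_mul_sum]
  exact Finset.sum_congr rfl fun _ _ => Finset.sum_congr rfl fun _ _ => by ring

end Matrix

theorem traceDist_eq_trace_cfcAbs {N : ℕ} (A B : Matrix (Fin N) (Fin N) ℂ) :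
    traceDist A B = (1 / 2) * (CFC.abs (A - B)).trace.re := by
  have hX := (posSemidef_conjTranspose_mul_self (A - B)).1
  rw [CFC.abs, CFC.sqrt_eq_real_sqrt _ (posSemidef_conjTranspose_mul_self _).nonneg,
    cfcₙ_eq_cfc, star_eq_conjTranspose, hX.cfc_eq, IsHermitian.cfc, Unitary.conjStarAlgAut_apply]
  rfl

theorem traceDist_submatrix_eq_sum_abs_eigenvalues {ι : Type*} [Fintype ι] [DecidableEq ι]
    {N : ℕ} (A B : Matrix ι ι ℂ) (h : (A - B).IsHermitian) (e : Fin N ≃ ι) :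
    traceDist (A.submatrix e e) (B.submatrix e e) = (1 / 2) * ∑ j, |h.eigenvalues j| := by
  rw [traceDist_eq_trace_cfcAbs,
    show A.submatrix e e - B.submatrix e e = (A - B).submatrix e e from rfl, cfcAbs_submatrix]
  have htrace : ((CFC.abs (A - B)).submatrix e e).trace = (CFC.abs (A - B)).trace :=
    e.sum_comp fun i => CFC.abs (A - B) i i
  rw [htrace, h.trace_cfcAbs, Complex.re_sum]
  simp

theorem traceDist_unitary_conj_le {ι κ : Type*} [Fintype ι] [DecidableEq ι] [Fintype κ] {N : ℕ}
    (e : Fin N ≃ ι) {W : Matrix ι ι ℂ} (hW : W ∈ unitaryGroup ι ℂ) (q : κ → ℝ)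
    (hq : ∀ i, 0 ≤ q i) (ψ : κ → ι → ℂ) (hψ : ∀ i, star (ψ i) ⬝ᵥ ψ i = 1) {ρ : Matrix ι ι ℂ}
    (hρ : ρ = ∑ i, (q i : ℂ) • vecMulVec (ψ i) (star (ψ i))) :
    traceDist ((W * ρ * Wᴴ).submatrix e e) (ρ.submatrix e e) ≤
      ∑ i, q i * √(1 - ‖star (ψ i) ⬝ᵥ (W *ᵥ ψ i)‖ ^ 2) := by
  have hdecomp : W * ρ * Wᴴ - ρ = ∑ i, (q i : ℂ) •
      (vecMulVec (W *ᵥ ψ i) (star (W *ᵥ ψ i)) - vecMulVec (ψ i) (star (ψ i))) := by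
    simp only [hρ, Matrix.mul_sum, Matrix.sum_mul, ← Finset.sum_sub_distrib, smul_sub,
      Matrix.mul_smul, Matrix.smul_mul, mul_vecMulVec, vecMulVec_mul, star_mulVec]
  have hherm : (W * ρ * Wᴴ - ρ).IsHermitian := by
    rw [hdecomp]
    simp [IsHermitian, conjTranspose_sum, conjTranspose_smul]
  rw [traceDist_submatrix_eq_sum_abs_eigenvalues _ _ hherm]
  have hWψ : ∀ i, star (W *ᵥ ψ i) ⬝ᵥ (W *ᵥ ψ i) = 1 := fun i =>
    (star_mulVec_dotProduct_mulVec_of_mem_unitaryGroup hW _ _).trans (hψ i)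
  linarith [hherm.sum_abs_eigenvalues_le q hq _ ψ hWψ hψ hdecomp]

theorem stmt_17_general {dA dB dC m : ℕ}
    (q : Fin m → ℝ) (hq : ∀ i, 0 ≤ q i) (hqsum : ∑ i, q i = 1)
    (α : Fin m → Fin dA → ℂ) (β : Fin m → Fin dB → ℂ)
    (hα : ∀ i, star (α i) ⬝ᵥ α i = 1) (hβ : ∀ i, star (β i) ⬝ᵥ β i = 1)
    (ρ : Matrix (Fin dA × Fin dB) (Fin dA × Fin dB) ℂ)
    (hρ : ρ = ∑ i, ((q i : ℂ) •
      Matrix.vecMulVec (fun p => α i p.1 * β i p.2) (star fun p => α i p.1 * β i p.2)))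
    (Ψ : (Fin dA × Fin dB) × Fin dC → ℂ)
    (hΨ : ∀ p p' : Fin dA × Fin dB, ρ p p' = ∑ c, Ψ (p, c) * star (Ψ (p', c)))
    (U : Matrix (Fin dA) (Fin dA) ℂ) (hU : U ∈ Matrix.unitaryGroup (Fin dA) ℂ)
    (V : Matrix (Fin dB) (Fin dB) ℂ) (hV : V ∈ Matrix.unitaryGroup (Fin dB) ℂ)
    (n : ℕ) (toFin : (Fin dA × Fin dB) ≃ Fin n)
    (UA : Matrix (Fin dA × Fin dB) (Fin dA × Fin dB) ℂ)
    (hUA : UA = U ⊗ₖ (1 : Matrix (Fin dB) (Fin dB) ℂ))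
    (UA3 VB3 : Matrix ((Fin dA × Fin dB) × Fin dC) ((Fin dA × Fin dB) × Fin dC) ℂ)
    (hUA3 : UA3 = UA ⊗ₖ (1 : Matrix (Fin dC) (Fin dC) ℂ))
    (hVB3 : VB3 = ((1 : Matrix (Fin dA) (Fin dA) ℂ) ⊗ₖ V) ⊗ₖ (1 : Matrix (Fin dC) (Fin dC) ℂ)) :
    traceDist ((UA * ρ * UAᴴ).submatrix toFin.symm toFin.symm)
        (ρ.submatrix toFin.symm toFin.symm) ≤
      Real.sqrt (1 - ‖star (VB3 *ᵥ Ψ) ⬝ᵥ (UA3 *ᵥ Ψ)‖ ^ 2) := by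
  subst hUA
  set ψ : Fin m → Fin dA × Fin dB → ℂ := fun i p => α i p.1 * β i p.2
  set c : Fin m → ℂ := fun i => star (α i) ⬝ᵥ (U *ᵥ α i)
  have hψ : ∀ i, star (ψ i) ⬝ᵥ ψ i = 1 := fun i => by
    simp only [ψ, star_prod_dotProduct_prod, hα, hβ, one_mul]
  have hψUψ : ∀ i, star (ψ i) ⬝ᵥ ((U ⊗ₖ 1) *ᵥ ψ i) = c i := fun i => by
    simp only [ψ, kronecker_mulVec_prod, one_mulVec, star_prod_dotProduct_prod, hβ, mul_one, c]
  have hc : ∀ i, ‖c i‖ ≤ 1 := fun i => norm_star_dotProduct_le_one (hα i)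
    ((star_mulVec_dotProduct_mulVec_of_mem_unitaryGroup hU _ _).trans (hα i))
  have hb : ∀ i, ‖star (V *ᵥ β i) ⬝ᵥ β i‖ ≤ 1 := fun i => norm_star_dotProduct_le_one
    ((star_mulVec_dotProduct_mulVec_of_mem_unitaryGroup hV _ _).trans (hβ i)) (hβ i)
  have hoverlap : star (VB3 *ᵥ Ψ) ⬝ᵥ (UA3 *ᵥ Ψ) =
      ∑ i, (q i : ℂ) * (c i * (star (V *ᵥ β i) ⬝ᵥ β i)) := by
    rw [hUA3, hVB3, star_kronecker_one_mulVec_dotProduct hΨ, hρ, Matrix.mul_sum, trace_sum]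
    refine Finset.sum_congr rfl fun i _ => ?_
    rw [Matrix.mul_smul, trace_smul, trace_mul_vecMulVec_star, kronecker_mulVec_prod,
      kronecker_mulVec_prod, one_mulVec, one_mulVec, star_prod_dotProduct_prod, smul_eq_mul]
  have hoverlap_le : ‖star (VB3 *ᵥ Ψ) ⬝ᵥ (UA3 *ᵥ Ψ)‖ ≤ ∑ i, q i * ‖c i‖ :=
    hoverlap ▸ norm_sum_ofReal_mul_mul_le q hq c _ hb
  calc _ ≤ ∑ i, q i * √(1 - ‖c i‖ ^ 2) := by
        simpa only [hψUψ] using traceDist_unitary_conj_le toFin.symm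
          (kronecker_mem_unitary hU (one_mem _)) q hq ψ hψ hρ
    _ ≤ _ := sum_mul_sqrt_one_sub_sq_le q _ hq hqsum (fun _ => norm_nonneg _) hc
        (norm_nonneg _) hoverlap_le

/-- For a separable state ρ_AB with purification |Ψ⟩_ABC and local unitaries
U_A, V_B: T(U_AρU_A†, ρ) ≤ √(1 − |⟨Ψ|V_B†U_A|Ψ⟩|²). -/
theorem stmt_17 {dA dB dC m : ℕ}
    (q : Fin m → ℝ) (hq : ∀ i, 0 ≤ q i) (hqsum : ∑ i, q i = 1)
    (α : Fin m → Fin dA → ℂ) (β : Fin m → Fin dB → ℂ)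
    (hα : ∀ i, star (α i) ⬝ᵥ α i = 1) (hβ : ∀ i, star (β i) ⬝ᵥ β i = 1)
    (ρ : Matrix (Fin dA × Fin dB) (Fin dA × Fin dB) ℂ)
    (hρ : ρ = ∑ i, ((q i : ℂ) •
      Matrix.vecMulVec (fun p => α i p.1 * β i p.2) (star fun p => α i p.1 * β i p.2)))
    (Ψ : (Fin dA × Fin dB) × Fin dC → ℂ)
    (hΨ : ∀ p p' : Fin dA × Fin dB, ρ p p' = ∑ c, Ψ (p, c) * star (Ψ (p', c)))
    (U : Matrix (Fin dA) (Fin dA) ℂ) (hU : U ∈ Matrix.unitaryGroup (Fin dA) ℂ)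
    (V : Matrix (Fin dB) (Fin dB) ℂ) (hV : V ∈ Matrix.unitaryGroup (Fin dB) ℂ)
    (n : ℕ) (hn : n = dA * dB) (toFin : (Fin dA × Fin dB) ≃ Fin n)
    (UA : Matrix (Fin dA × Fin dB) (Fin dA × Fin dB) ℂ)
    (hUA : UA = U ⊗ₖ (1 : Matrix (Fin dB) (Fin dB) ℂ))
    (UA3 VB3 : Matrix ((Fin dA × Fin dB) × Fin dC) ((Fin dA × Fin dB) × Fin dC) ℂ)
    (hUA3 : UA3 = UA ⊗ₖ (1 : Matrix (Fin dC) (Fin dC) ℂ))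
    (hVB3 : VB3 = ((1 : Matrix (Fin dA) (Fin dA) ℂ) ⊗ₖ V) ⊗ₖ (1 : Matrix (Fin dC) (Fin dC) ℂ)) :
    traceDist ((UA * ρ * UAᴴ).submatrix toFin.symm toFin.symm)
        (ρ.submatrix toFin.symm toFin.symm) ≤
      Real.sqrt (1 - ‖star (VB3 *ᵥ Ψ) ⬝ᵥ (UA3 *ᵥ Ψ)‖ ^ 2) :=
  stmt_17_general q hq hqsum α β hα hβ ρ hρ Ψ hΨ U hU V hV n toFin UA hUA UA3 VB3 hUA3 hVB3
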